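/- Let the 3×3 eigenvalue problem for simple shear be: (α/b+1)Γ₁₁ + (K/b)Γ₁₂ = Γ, (α/b+1)Γ₁₂ + (K/2b)Γ₂₂ = 0, (α/b+1)Γ₁₃ + (K/2b)Γ₂₃ = 0, (α/b+1)Γ₂₂ = Γ, (α/b+1)Γ₂₃ = 0, (α/b+1)Γ₃₃ = Γ, where Γ = (Γ₁₁+Γ₂₂+Γ₃₃)/3 and Γ symmetric. Then the set of α ∈ ℂ for which a nonzero symmetric Γ exists equals { −b, b(λ₁−1), b(λ₂−1), b(λ₃−1) }, where λ₁, λ₂, λ₃ are the roots of λ³ = λ² + K²/(6b²). -/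

import Mathlib

/-!
Put `e = α / b + 1` and `m = (Γ₁₁ + Γ₂₂ + Γ₃₃) / 3`. The system is triangular in `e`: it gives
`e Γ₂₂ = e Γ₃₃ = m`, `e² Γ₁₂ = -(K / 2b) m` and `e³ Γ₁₁ = (e² + K² / 2b²) m`, so summing the
diagonal yields `m (e³ - e² - K² / 6b²) = 0`. When `e ≠ 0` and `m = 0` the triangular system
forces `Γ = 0`, hence a nonzero solution needs `e = 0` or `e` a root of the cubic; conversely
each of these values of `e` has an explicit nonzero symmetric solution.
-/

/-- The simple-shear moment eigenvalue system for a symmetric `Γ`. -/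
def ShearSystem (b K : ℝ) (α : ℂ) (Γ : Matrix (Fin 3) (Fin 3) ℂ) : Prop :=
  letI Γbar : ℂ := (Γ 0 0 + Γ 1 1 + Γ 2 2) / 3
  (α / b + 1) * Γ 0 0 + (K / b) * Γ 0 1 = Γbar ∧
  (α / b + 1) * Γ 0 1 + (K / (2 * b)) * Γ 1 1 = 0 ∧
  (α / b + 1) * Γ 0 2 + (K / (2 * b)) * Γ 1 2 = 0 ∧
  (α / b + 1) * Γ 1 1 = Γbar ∧
  (α / b + 1) * Γ 1 2 = 0 ∧
  (α / b + 1) * Γ 2 2 = Γbar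

open Matrix

namespace ShearSystem

variable {b K : ℝ} {α : ℂ} {Γ : Matrix (Fin 3) (Fin 3) ℂ}

theorem mean_mul_cubic_eq_zero (h : ShearSystem b K α Γ) :
    (Γ 0 0 + Γ 1 1 + Γ 2 2) / 3 *
      ((α / b + 1) ^ 3 - (α / b + 1) ^ 2 - (K : ℂ) ^ 2 / (6 * (b : ℂ) ^ 2)) = 0 := by
  obtain ⟨h₀₀, h₀₁, -, h₁₁, -, h₂₂⟩ := h
  set e : ℂ := α / b + 1
  set k : ℂ := K / (2 * b)
  linear_combination (e ^ 2 * h₀₀ - 2 * k * e * h₀₁ + (e ^ 2 + 2 * k ^ 2) * h₁₁ + e ^ 2 * h₂₂) / 3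

theorem eq_zero_of_mean_eq_zero (h : ShearSystem b K α Γ) (hΓ : Γ.IsSymm) (he : α / b + 1 ≠ 0)
    (hm : (Γ 0 0 + Γ 1 1 + Γ 2 2) / 3 = 0) : Γ = 0 := by
  obtain ⟨h₀₀, h₀₁, h₀₂, h₁₁, h₁₂, h₂₂⟩ := h
  rw [hm] at h₀₀ h₁₁ h₂₂
  have g₁₂ : Γ 1 2 = 0 := (mul_eq_zero.mp h₁₂).resolve_left he
  have g₁₁ : Γ 1 1 = 0 := (mul_eq_zero.mp h₁₁).resolve_left he
  have g₂₂ : Γ 2 2 = 0 := (mul_eq_zero.mp h₂₂).resolve_left he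
  have g₀₂ : Γ 0 2 = 0 := by simpa [g₁₂, he] using h₀₂
  have g₀₁ : Γ 0 1 = 0 := by simpa [g₁₁, he] using h₀₁
  have g₀₀ : Γ 0 0 = 0 := by simpa [g₀₁, he] using h₀₀
  ext i j
  fin_cases i <;> fin_cases j <;>
    simp [g₀₀, g₀₁, g₀₂, g₁₁, g₁₂, g₂₂, hΓ.apply 0 1, hΓ.apply 0 2, hΓ.apply 1 2]

end ShearSystem

variable {b K : ℝ} {α : ℂ}

theorem shearSystem_of_div_add_one_eq_zero (he : α / b + 1 = 0) :
    ShearSystem b K α !![0, 0, 1; 0, 0, 0; 1, 0, 0] := by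
  simp [ShearSystem, he]

theorem shearSystem_of_cubic (hb : b ≠ 0) {lam : ℂ} (he : α / b + 1 = lam)
    (hc : lam ^ 3 = lam ^ 2 + (K : ℂ) ^ 2 / (6 * (b : ℂ) ^ 2)) :
    ShearSystem b K α
      !![2 * b ^ 2 * lam ^ 2 + K ^ 2, -K * b * lam, 0;
        -K * b * lam, 2 * b ^ 2 * lam ^ 2, 0;
        0, 0, 2 * b ^ 2 * lam ^ 2] := by
  have hb' : (b : ℂ) ≠ 0 := Complex.ofReal_ne_zero.mpr hb
  have hc' : 6 * (b : ℂ) ^ 2 * lam ^ 3 = 6 * b ^ 2 * lam ^ 2 + K ^ 2 := by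
    field_simp at hc
    linear_combination hc
  have hKb : (K / b : ℂ) * b = K := div_mul_cancel₀ _ hb'
  have hKb₂ : (K / (2 * b) : ℂ) * (2 * b) = K := div_mul_cancel₀ _ (mul_ne_zero two_ne_zero hb')
  simp only [ShearSystem, he, of_apply, cons_val', cons_val_zero, cons_val_one, cons_val_two,
    head_cons, tail_cons, empty_val', cons_val_fin_one, head_fin_const]
  refine ⟨?_, ?_, by ring, ?_, by ring, ?_⟩
  · linear_combination hc' / 3 - K * lam * hKb
  · linear_combination b * lam ^ 2 * hKb₂
  · linear_combination hc' / 3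
  · linear_combination hc' / 3

theorem exists_ne_zero_isSymm_shearSystem_iff (hb : b ≠ 0) :
    (∃ Γ : Matrix (Fin 3) (Fin 3) ℂ, Γ ≠ 0 ∧ Γ.IsSymm ∧ ShearSystem b K α Γ) ↔
      α / b + 1 = 0 ∨
        (α / b + 1) ^ 3 = (α / b + 1) ^ 2 + (K : ℂ) ^ 2 / (6 * (b : ℂ) ^ 2) := by
  constructor
  · rintro ⟨Γ, hΓ₀, hΓ, h⟩
    refine or_iff_not_imp_left.mpr fun he ↦ ?_
    have hm : (Γ 0 0 + Γ 1 1 + Γ 2 2) / 3 ≠ 0 := fun hm ↦ hΓ₀ (h.eq_zero_of_mean_eq_zero hΓ he hm)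
    linear_combination (mul_eq_zero.mp h.mean_mul_cubic_eq_zero).resolve_left hm
  · intro hroot
    by_cases he : α / b + 1 = 0
    · refine ⟨_, fun h ↦ ?_, ?_, shearSystem_of_div_add_one_eq_zero (K := K) he⟩
      · simpa using congr_fun₂ h 0 2
      · ext i j
        fin_cases i <;> fin_cases j <;> rfl
    · refine ⟨_, fun h ↦ ?_, ?_, shearSystem_of_cubic hb rfl (hroot.resolve_left he)⟩
      · simpa [hb, he] using congr_fun₂ h 2 2
      · ext i j
        fin_cases i <;> fin_cases j <;> rfl

theorem div_add_one_eq_iff {F : Type*} [Field F] {a b c : F} (hb : b ≠ 0) :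
    a / b + 1 = c ↔ a = b * (c - 1) := by
  rw [← eq_sub_iff_add_eq, div_eq_iff hb, mul_comm]

theorem stmt13_general (b K : ℝ) (hb : 0 < b)
    (lam1 lam2 lam3 : ℂ)
    (hroots : ∀ lam : ℂ,
      lam ^ 3 = lam ^ 2 + (K : ℂ) ^ 2 / (6 * (b : ℂ) ^ 2) ↔
        lam = lam1 ∨ lam = lam2 ∨ lam = lam3) :
    {α : ℂ | ∃ Γ : Matrix (Fin 3) (Fin 3) ℂ, Γ ≠ 0 ∧ Γ.IsSymm ∧
        ShearSystem b K α Γ} =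
      {(-b : ℂ), (b : ℂ) * (lam1 - 1), (b : ℂ) * (lam2 - 1), (b : ℂ) * (lam3 - 1)} := by
  have hb' : (b : ℂ) ≠ 0 := Complex.ofReal_ne_zero.mpr hb.ne'
  ext α
  simp only [Set.mem_ofPred_eq, Set.mem_insert_iff, Set.mem_singleton_iff,
    exists_ne_zero_isSymm_shearSystem_iff hb.ne', hroots, div_add_one_eq_iff hb', zero_sub,
    mul_neg, mul_one]

/-- the eigenvalues of the simple-shear moment system are
`−b` and `b(λᵢ − 1)`, where `λ₁, λ₂, λ₃` are the roots of
`λ³ = λ² + K²/(6b²)`. -/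
theorem stmt13 (b K : ℝ) (hb : 0 < b) (hK : K ≠ 0)
    (lam1 lam2 lam3 : ℂ)
    (hroots : ∀ lam : ℂ,
      lam ^ 3 = lam ^ 2 + (K : ℂ) ^ 2 / (6 * (b : ℂ) ^ 2) ↔
        lam = lam1 ∨ lam = lam2 ∨ lam = lam3) :
    {α : ℂ | ∃ Γ : Matrix (Fin 3) (Fin 3) ℂ, Γ ≠ 0 ∧ Γ.IsSymm ∧
        ShearSystem b K α Γ} =
      {(-b : ℂ), (b : ℂ) * (lam1 - 1), (b : ℂ) * (lam2 - 1), (b : ℂ) * (lam3 - 1)} :=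
  stmt13_general b K hb lam1 lam2 lam3 hroots
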